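/- Suppose hospitals have matroid rank valuations and doctors have cardinal utilities c_d : H → ℝ with c_d(unallocated) = 0. Every non-redundant allocation that maximizes doctor utilitarian welfare among all non-redundant allocations is stable. -/

import Mathlib

open Finset

/-- A matroid rank function on subsets of a finite ground set. -/
def IsMRF {α : Type*} [DecidableEq α] (v : Finset α → ℤ) : Prop :=
  v ∅ = 0 ∧
  (∀ (S : Finset α) (d : α), d ∉ S →
    v (insert d S) - v S = 0 ∨ v (insert d S) - v S = 1) ∧
  (∀ (S T : Finset α) (d : α), S ⊆ T → d ∉ T →
    v (insert d T) - v T ≤ v (insert d S) - v S)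

/-- The bundle of doctors assigned to hospital `h` under allocation `X`. -/
def bundle {n m : ℕ} (X : Fin m → Option (Fin n)) (h : Fin n) : Finset (Fin m) :=
  Finset.univ.filter (fun d => X d = some h)

/-- An allocation is non-redundant if every hospital's bundle is independent. -/
def NonRedundant {n m : ℕ} (v : Fin n → Finset (Fin m) → ℤ)
    (X : Fin m → Option (Fin n)) : Prop :=
  ∀ h, v h (bundle X h) = (bundle X h).card

/-- Hospital utilitarian welfare. -/
def USW {n m : ℕ} (v : Fin n → Finset (Fin m) → ℤ) (X : Fin m → Option (Fin n)) : ℤ :=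
  ∑ h, v h (bundle X h)

/-- Doctor `d` strictly prefers the first outcome to the second; every hospital is
strictly preferred to being unallocated (`none`). -/
def OptStrictPref {n m : ℕ} (P : Fin m → Fin n → Fin n → Prop) (d : Fin m) :
    Option (Fin n) → Option (Fin n) → Prop
  | some h, some h' => P d h h'
  | some _, none => True
  | none, _ => False

/-- `(h, S)` is a blocking pair for `X`. -/
def IsBlockingPair {n m : ℕ} (v : Fin n → Finset (Fin m) → ℤ)
    (P : Fin m → Fin n → Fin n → Prop) (X : Fin m → Option (Fin n))
    (h : Fin n) (S : Finset (Fin m)) : Prop :=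
  v h S = S.card ∧ v h (bundle X h) < v h S ∧
    ∀ d ∈ S, X d = some h ∨ OptStrictPref P d (some h) (X d)

/-- An allocation is stable if it is non-redundant and admits no blocking pair. -/
def Stable {n m : ℕ} (v : Fin n → Finset (Fin m) → ℤ)
    (P : Fin m → Fin n → Fin n → Prop) (X : Fin m → Option (Fin n)) : Prop :=
  NonRedundant v X ∧ ¬ ∃ h S, IsBlockingPair v P X h S

/-- The utility of doctor `d` for an outcome (a hospital, or `none` for unallocated,
which is worth `0`). -/
def optUtil {n m : ℕ} (c : Fin m → Fin n → ℝ) (d : Fin m) : Option (Fin n) → ℝ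
  | none => 0
  | some h => c d h

/-- Doctor utilitarian welfare. -/
def DUSW {n m : ℕ} (c : Fin m → Fin n → ℝ) (X : Fin m → Option (Fin n)) : ℝ :=
  ∑ d, optUtil c d (X d)

/-- Stability with cardinal doctor utilities: there is no hospital `h` and independent
set `S` with `v h S > v h X_h` such that every doctor in `S` weakly prefers `h` to its
current assignment, strictly unless already assigned to `h`. -/
def CStable {n m : ℕ} (v : Fin n → Finset (Fin m) → ℤ) (c : Fin m → Fin n → ℝ)
    (X : Fin m → Option (Fin n)) : Prop :=
  NonRedundant v X ∧
  ¬ ∃ (h : Fin n) (S : Finset (Fin m)),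
      v h S = S.card ∧ v h (bundle X h) < v h S ∧
      ∀ d ∈ S, X d = some h ∨ optUtil c d (X d) < c d h

/-
If `(h, S)` blocked `X`, then `v_h(S) > v_h(X_h)` and the matroid exchange property yield a
doctor `d ∈ S \ X_h` with `X_h ∪ {d}` independent. Moving `d` to `h` keeps the allocation
non-redundant (the other bundles only shrink, and independence is hereditary), while `d`
strictly prefers `h` to `X(d)`, so doctor welfare strictly increases: contradiction.
-/

namespace IsMRF

variable {α : Type*} [DecidableEq α] {v : Finset α → ℤ}

theorem le_insert (hv : IsMRF v) (S : Finset α) (d : α) : v S ≤ v (insert d S) := by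
  by_cases hd : d ∈ S
  · rw [insert_eq_of_mem hd]
  · rcases hv.2.1 S d hd with h | h <;> omega

theorem le_union (hv : IsMRF v) (A U : Finset α) : v A ≤ v (A ∪ U) := by
  induction U using Finset.induction_on with
  | empty => simp
  | insert a U _ ih => exact ih.trans (by rw [union_insert]; exact hv.le_insert _ a)

theorem mono (hv : IsMRF v) {T S : Finset α} (hTS : T ⊆ S) : v T ≤ v S := by
  simpa [union_eq_right.2 hTS] using hv.le_union T S

theorem union_le_add_card (hv : IsMRF v) (A U : Finset α) : v (A ∪ U) ≤ v A + #U := by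
  induction U using Finset.induction_on with
  | empty => simp
  | insert a U ha ih =>
    rw [union_insert, card_insert_of_notMem ha]
    by_cases hA : a ∈ A ∪ U
    · rw [insert_eq_of_mem hA]; push_cast; omega
    · have := hv.2.1 (A ∪ U) a hA; push_cast; omega

theorem le_card (hv : IsMRF v) (S : Finset α) : v S ≤ #S := by
  simpa [hv.1] using hv.union_le_add_card ∅ S

theorem eq_card_of_subset (hv : IsMRF v) {S T : Finset α} (hS : v S = #S) (hTS : T ⊆ S) :
    v T = #T := by
  have hST := hv.union_le_add_card T (S \ T)
  rw [union_sdiff_of_subset hTS, card_sdiff_of_subset hTS] at hST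
  have := hv.le_card T
  have := card_le_card hTS
  omega

theorem union_eq_of_forall_insert_eq (hv : IsMRF v) (A U : Finset α)
    (hU : ∀ a ∈ U, v (insert a A) = v A) : v (A ∪ U) = v A := by
  induction U using Finset.induction_on with
  | empty => simp
  | insert a U _ ih =>
    have hAU := ih fun b hb => hU b (mem_insert_of_mem hb)
    rw [union_insert]
    by_cases hA : a ∈ A ∪ U
    · rwa [insert_eq_of_mem hA]
    · have haA : a ∉ A := fun h => hA (mem_union_left _ h)
      have := hv.2.2 A (A ∪ U) a subset_union_left hA
      have := hU a (mem_insert_self a U)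
      have := hv.le_insert (A ∪ U) a
      omega

theorem exists_insert_eq_add_one_of_lt (hv : IsMRF v) {A B : Finset α} (hAB : v A < v B) :
    ∃ d ∈ B, d ∉ A ∧ v (insert d A) = v A + 1 := by
  by_contra! hcon
  have hflat : v (A ∪ B) = v A := by
    refine hv.union_eq_of_forall_insert_eq A B fun a ha => ?_
    by_cases haA : a ∈ A
    · rw [insert_eq_of_mem haA]
    · have := hv.2.1 A a haA
      have := hcon a ha haA
      omega
  have := hv.mono (subset_union_right : B ⊆ A ∪ B)
  omega

end IsMRF

section Reassign

variable {n m : ℕ} {X : Fin m → Option (Fin n)} {d : Fin m} {h : Fin n}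

@[simp]
theorem mem_bundle {e : Fin m} : e ∈ bundle X h ↔ X e = some h := by
  simp [bundle]

theorem bundle_update_self : bundle (Function.update X d (some h)) h = insert d (bundle X h) := by
  ext e
  by_cases he : e = d <;> simp [he]

theorem bundle_update_of_ne {h' : Fin n} (hh : h' ≠ h) :
    bundle (Function.update X d (some h)) h' = (bundle X h').erase d := by
  ext e
  by_cases he : e = d <;> simp [he, Ne.symm hh]

theorem NonRedundant.update {v : Fin n → Finset (Fin m) → ℤ} (hv : ∀ h, IsMRF (v h))
    (hX : NonRedundant v X) (hd : d ∉ bundle X h)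
    (hins : v h (insert d (bundle X h)) = v h (bundle X h) + 1) :
    NonRedundant v (Function.update X d (some h)) := by
  intro h'
  by_cases hh : h' = h
  · subst hh
    rw [bundle_update_self, hins, hX h', card_insert_of_notMem hd]
    push_cast
    ring
  · rw [bundle_update_of_ne hh]
    exact (hv h').eq_card_of_subset (hX h') (erase_subset _ _)

theorem DUSW_sub_of_eq_of_ne (c : Fin m → Fin n → ℝ) {Y : Fin m → Option (Fin n)}
    (hY : ∀ e, e ≠ d → Y e = X e) :
    DUSW c Y - DUSW c X = optUtil c d (Y d) - optUtil c d (X d) := by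
  rw [DUSW, DUSW, ← sum_sub_distrib]
  exact sum_eq_single d (fun e _ he => by rw [hY e he, sub_self]) (by simp)

end Reassign

/-- With matroid rank hospital valuations and cardinal doctor utilities, every
non-redundant allocation maximizing doctor utilitarian welfare among all
non-redundant allocations is stable. -/
theorem max_doctor_usw_stable {n m : ℕ} (v : Fin n → Finset (Fin m) → ℤ)
    (c : Fin m → Fin n → ℝ) (hv : ∀ h, IsMRF (v h))
    (X : Fin m → Option (Fin n)) (hX : NonRedundant v X)
    (hmax : ∀ Y : Fin m → Option (Fin n), NonRedundant v Y → DUSW c Y ≤ DUSW c X) :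
    CStable v c X := by
  refine ⟨hX, ?_⟩
  rintro ⟨h, S, -, hlt, hpref⟩
  obtain ⟨d, hdS, hdX, hins⟩ := (hv h).exists_insert_eq_add_one_of_lt hlt
  have hgain : optUtil c d (X d) < c d h :=
    (hpref d hdS).resolve_left fun hXd => hdX (mem_bundle.2 hXd)
  have hle := hmax _ (hX.update hv hdX hins)
  have hdiff : DUSW c (Function.update X d (some h)) - DUSW c X = c d h - optUtil c d (X d) := by
    simpa [optUtil] using DUSW_sub_of_eq_of_ne c fun e he => Function.update_of_ne he (some h) X
  linarith
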